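/- For the program P = { f X → Y X } with FS = {f/1, g/1} and CS = {0/0, 1/0, c/1} containing a unary constructor c, the denotations ⟦f 0⟧^P and ⟦f 1⟧^P differ: c 0 ∈ ⟦f 0⟧^P and c 1 ∈ ⟦f 1⟧^P, but c 0 ∉ ⟦f 1⟧^P (i.e. adding a constructor of arity 1 makes the Example 2 counterexample to the hypothesis of full abstraction disappear). -/

import Mathlib

/-- A signature: function symbols and constructor symbols, each with an arity. -/
structure Sig where
  FS : Type
  CS : Type
  arityF : FS → ℕ
  arityC : CS → ℕ

/-- Applicative partial expressions over a signature.  Variables are natural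
numbers and `bot` is the distinguished 0-ary constructor `⊥`. -/
inductive Exp (σ : Sig) : Type where
  | var : ℕ → Exp σ
  | fn : σ.FS → Exp σ
  | cn : σ.CS → Exp σ
  | bot : Exp σ
  | app : Exp σ → Exp σ → Exp σ

variable {σ : Sig}

/-- `applyList e [e1, …, en]` is the curried application `e e1 … en`. -/
def applyList (e : Exp σ) (es : List (Exp σ)) : Exp σ := es.foldl Exp.app e

/-- Partial patterns `Pat_⊥`. -/
inductive IsPPat : Exp σ → Prop where
  | var (x : ℕ) : IsPPat (Exp.var x)
  | bot : IsPPat (Exp.bot : Exp σ)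
  | capp (c : σ.CS) (ts : List (Exp σ)) (har : ts.length ≤ σ.arityC c)
      (hts : ∀ t ∈ ts, IsPPat t) : IsPPat (applyList (Exp.cn c) ts)
  | fapp (f : σ.FS) (ts : List (Exp σ)) (har : ts.length < σ.arityF f)
      (hts : ∀ t ∈ ts, IsPPat t) : IsPPat (applyList (Exp.fn f) ts)

/-- The constructor `⊥` does not occur in the expression. -/
def BotFree : Exp σ → Prop
  | .bot => False
  | .app a b => BotFree a ∧ BotFree b
  | _ => True

/-- Total patterns `Pat`. -/
def IsPat (t : Exp σ) : Prop := IsPPat t ∧ BotFree t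

/-- First-order patterns `FOPat`. -/
inductive IsFOPat : Exp σ → Prop where
  | var (x : ℕ) : IsFOPat (Exp.var x)
  | capp (c : σ.CS) (ts : List (Exp σ)) (har : ts.length = σ.arityC c)
      (hts : ∀ t ∈ ts, IsFOPat t) : IsFOPat (applyList (Exp.cn c) ts)

/-- The list of occurrences of variables in an expression. -/
def occVars : Exp σ → List ℕ
  | .var x => [x]
  | .app a b => occVars a ++ occVars b
  | _ => []

/-- Applying a substitution to an expression. -/
def subst (θ : ℕ → Exp σ) : Exp σ → Exp σ
  | .var x => θ x
  | .fn f => .fn f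
  | .cn c => .cn c
  | .bot => .bot
  | .app a b => .app (subst θ a) (subst θ b)

/-- Partial-pattern substitutions `PSubst_⊥`. -/
def PSub (θ : ℕ → Exp σ) : Prop := ∀ x, IsPPat (θ x)

/-- A program rule `f t1 … tn → r` (the left-hand side is `f` applied to `lhs`). -/
structure Rule (σ : Sig) where
  fn : σ.FS
  lhs : List (Exp σ)
  rhs : Exp σ

/-- Well-formedness of a rule: `f` is applied to as many arguments as its arity,
the arguments form a linear tuple of total patterns. -/
def Rule.WF (r : Rule σ) : Prop :=
  r.lhs.length = σ.arityF r.fn ∧ (∀ t ∈ r.lhs, IsPat t) ∧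
    (r.lhs.flatMap occVars).Nodup

/-- The rule has no extra variables: all variables of the right-hand side occur
in the left-hand side. -/
def Rule.NoExtra (r : Rule σ) : Prop :=
  ∀ x ∈ occVars r.rhs, x ∈ r.lhs.flatMap occVars

abbrev Program (σ : Sig) := Set (Rule σ)

/-- A program without extra variables, all whose rules are well formed. -/
def WFProg (P : Program σ) : Prop := ∀ r ∈ P, r.WF ∧ r.NoExtra

/-- `h ∈ Σ` (a function symbol, a constructor symbol, or `⊥`). -/
def IsSymb : Exp σ → Prop
  | .fn _ => True
  | .cn _ => True
  | .bot => True
  | _ => False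

/-- HOCRWL derivation trees for statements `e ⇒ t`, with rules
(B), (RR), (DC) and (OR). -/
inductive DTree (P : Program σ) : Exp σ → Exp σ → Type where
  | bot (e : Exp σ) : DTree P e Exp.bot
  | rr (x : ℕ) : DTree P (Exp.var x) (Exp.var x)
  | dc (h : Exp σ) (es ts : List (Exp σ)) (hsym : IsSymb h)
      (hlen : es.length = ts.length) (hpat : IsPPat (applyList h ts))
      (ds : ∀ p ∈ es.zip ts, DTree P p.1 p.2) :
      DTree P (applyList h es) (applyList h ts)
  | opr (r : Rule σ) (hr : r ∈ P) (θ : ℕ → Exp σ) (hθ : PSub θ)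
      (es as : List (Exp σ)) (t : Exp σ) (hlen : es.length = r.lhs.length)
      (ds : ∀ p ∈ es.zip (r.lhs.map (subst θ)), DTree P p.1 p.2)
      (d : DTree P (applyList (subst θ r.rhs) as) t) :
      DTree P (applyList (Exp.fn r.fn) (es ++ as)) t

/-- `P ⊢ e ⇒ t` is derivable in the HOCRWL proof calculus. -/
def Deriv (P : Program σ) (e t : Exp σ) : Prop := Nonempty (DTree P e t)

/-- The HOCRWL denotation `⟦e⟧^P = { t ∈ Pat_⊥ | P ⊢ e ⇒ t }`. -/
def den (P : Program σ) (e : Exp σ) : Set (Exp σ) := {t | IsPPat t ∧ Deriv P e t}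

/-- Observations: total patterns in the denotation. -/
def Obs (P : Program σ) (e : Exp σ) : Set (Exp σ) := {t | t ∈ den P e ∧ BotFree t}

/-- First-order observations: first-order patterns in the denotation. -/
def ObsFO (P : Program σ) (e : Exp σ) : Set (Exp σ) := {t | t ∈ den P e ∧ IsFOPat t}

/-- Contexts `C ::= [ ] | C e | e C`. -/
inductive Cntxt (σ : Sig) : Type where
  | hole : Cntxt σ
  | appL : Cntxt σ → Exp σ → Cntxt σ
  | appR : Exp σ → Cntxt σ → Cntxt σ

/-- Filling the hole of a context with an expression. -/
def Cntxt.fill : Cntxt σ → Exp σ → Exp σ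
  | .hole, e => e
  | .appL C e', e => .app (C.fill e) e'
  | .appR e' C, e => .app e' (C.fill e)

/-- Function symbols occurring in an expression. -/
def expFS : Exp σ → Set σ.FS
  | .fn f => {f}
  | .app a b => expFS a ∪ expFS b
  | _ => ∅

/-- Function symbols occurring in a rule. -/
def ruleFS (r : Rule σ) : Set σ.FS :=
  insert r.fn ((⋃ t ∈ r.lhs, expFS t) ∪ expFS r.rhs)

/-- Function symbols occurring in a program. -/
def progFS (P : Program σ) : Set σ.FS := ⋃ r ∈ P, ruleFS r

/-- Function symbols defined by a program (roots of left-hand sides). -/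
def defs (P : Program σ) : Set σ.FS := Rule.fn '' P

/-- `P'` is a safe extension of `(P, e)`: `P' = P ⊎ P''` where `P''` defines no
function symbol occurring in `P` or in `e`. -/
def SafeExt (P P' : Program σ) (e : Exp σ) : Prop :=
  ∃ P'' : Program σ, P' = P ∪ P'' ∧ Disjoint P P'' ∧
    Disjoint (defs P'') (expFS e ∪ progFS P)

/-- `e ∼ₙ e'` : `n`-extensional equivalence. -/
def ExtEquiv (P : Program σ) (n : ℕ) (e e' : Exp σ) : Prop :=
  ∀ es : List (Exp σ), es.length = n →
    den P (applyList e es) = den P (applyList e' es)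

/-- Function symbols: `f/1`, `g/1`. -/
inductive Ex4F where | f | g

/-- Constructor symbols: `0/0`, `1/0` and a unary constructor `c/1`. -/
inductive Ex4C where | c0 | c1 | cu

/-- The signature with the added unary constructor `c`. -/
def ex4Sig : Sig where
  FS := Ex4F
  CS := Ex4C
  arityF := fun s => match s with | .f => 1 | .g => 1
  arityC := fun s => match s with | .c0 => 0 | .c1 => 0 | .cu => 1

/-- The program `P = { f X → Y X }` (extra variable `Y`). -/
def ex4Prog : Program ex4Sig :=
  {⟨.f, [.var 0], .app (.var 1) (.var 0)⟩}

/-! Instantiating the extra variable `Y` of `f X → Y X` by the constructor `c` gives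
`f 0 ⇒ c 0` and `f 1 ⇒ c 1`. Conversely, if `p` is a partial pattern and `q ∈ {⊥, k}` for a
constant `k`, then `p q` derives only `⊥` or `c s` with `s ∈ {⊥, k}`: a (DC) step has to build
a partial pattern of the form `a b`, and in this signature those are exactly the `c b`; an (OR)
step passes `q` to `X`, so `θ X ∈ {⊥, k}`, and the same claim applies to the smaller derivation
from `θ Y (θ X)`. Hence `f 1` does not derive `c 0`. -/

namespace Exp

def head : Exp σ → Exp σ
  | .app a _ => a.head
  | e => e

@[simp]
theorem head_app (a b : Exp σ) : (Exp.app a b).head = a.head := rfl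

end Exp

@[simp]
theorem applyList_cons (h x : Exp σ) (l : List (Exp σ)) :
    applyList h (x :: l) = applyList (.app h x) l := rfl

@[simp]
theorem applyList_append_singleton (h x : Exp σ) (l : List (Exp σ)) :
    applyList h (l ++ [x]) = .app (applyList h l) x := by
  simp [applyList]

@[simp]
theorem head_applyList (h : Exp σ) (l : List (Exp σ)) : (applyList h l).head = h.head := by
  induction l generalizing h with
  | nil => rfl
  | cons x l ih => simp [ih]

theorem exists_applyList_eq_app {l : List (Exp σ)} (hl : l ≠ []) (h : Exp σ) :
    ∃ a b, applyList h l = .app a b := by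
  obtain ⟨l', x, rfl⟩ := (List.eq_nil_or_concat' l).resolve_left hl
  exact ⟨_, _, applyList_append_singleton h x l'⟩

theorem eq_nil_of_applyList_ne_app {h : Exp σ} {l : List (Exp σ)}
    (hne : ∀ a b, applyList h l ≠ .app a b) : l = [] := by
  by_contra hl
  obtain ⟨a, b, hab⟩ := exists_applyList_eq_app hl h
  exact hne a b hab

theorem applyList_eq_app {h p q : Exp σ} {l : List (Exp σ)}
    (hh : ∀ a b, h ≠ .app a b) (he : applyList h l = .app p q) :
    ∃ l', l = l' ++ [q] ∧ p = applyList h l' := by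
  rcases List.eq_nil_or_concat' l with rfl | ⟨l', x, rfl⟩
  · exact absurd he (hh p q)
  · simp only [applyList_append_singleton, Exp.app.injEq] at he
    exact ⟨l', by rw [he.2], he.1.symm⟩

theorem IsSymb.ne_app {h : Exp σ} (hh : IsSymb h) (a b : Exp σ) : h ≠ .app a b := by
  rintro rfl
  exact hh

theorem isPPat_cn (c : σ.CS) : IsPPat (.cn c : Exp σ) :=
  .capp c [] (Nat.zero_le _) (by simp)

theorem isPPat_fn {f : σ.FS} (hf : 0 < σ.arityF f) : IsPPat (.fn f : Exp σ) :=
  .fapp f [] hf (by simp)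

theorem isPPat_cn_app {c : σ.CS} (hc : 1 ≤ σ.arityC c) {t : Exp σ} (ht : IsPPat t) :
    IsPPat (.app (.cn c) t) :=
  .capp c [t] hc (by simpa)

theorem DTree.mem_bot_self {P : Program σ} {e t : Exp σ} (d : DTree P e t)
    (happ : ∀ a b, e ≠ .app a b) (hfn : ∀ f, e ≠ .fn f) : t ∈ ({.bot, e} : Set (Exp σ)) := by
  cases d with
  | bot => exact .inl rfl
  | rr => exact .inr rfl
  | dc h es ts _ hlen _ _ =>
    obtain rfl := eq_nil_of_applyList_ne_app happ
    obtain rfl : ts = [] := List.eq_nil_of_length_eq_zero hlen.symm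
    exact .inr rfl
  | opr r =>
    obtain hnil := eq_nil_of_applyList_ne_app happ
    exact absurd (by rw [hnil]; rfl) (hfn r.fn)

theorem DTree.mem_bot_cn {P : Program σ} {c : σ.CS} {q t : Exp σ}
    (hq : q ∈ ({.bot, .cn c} : Set (Exp σ))) (d : DTree P q t) :
    t ∈ ({.bot, .cn c} : Set (Exp σ)) := by
  rcases hq with rfl | rfl
  · obtain h | h := d.mem_bot_self (by simp) (by simp) <;> exact .inl h
  · exact d.mem_bot_self (by simp) (by simp)

theorem Deriv.cn {P : Program σ} (c : σ.CS) : Deriv P (.cn c) (.cn c) :=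
  ⟨.dc (.cn c) [] [] trivial rfl (isPPat_cn c) fun _ hp => by simp at hp⟩

theorem Deriv.cn_app {P : Program σ} {c : σ.CS} (hc : 1 ≤ σ.arityC c)
    {e t : Exp σ} (ht : IsPPat t) : Deriv P e t → Deriv P (.app (.cn c) e) (.app (.cn c) t)
  | ⟨d⟩ => ⟨.dc (.cn c) [e] [t] trivial rfl (isPPat_cn_app hc ht) fun p hp => by
      obtain rfl : p = (e, t) := by simpa using hp
      exact d⟩

theorem IsPPat.ex4_app_inv {a b : Exp ex4Sig} (h : IsPPat (.app a b)) :
    a = .cn .cu ∧ IsPPat b := by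
  generalize he : Exp.app a b = e at h
  cases h with
  | var => cases he
  | bot => cases he
  | capp c ts har hts =>
    obtain ⟨ts', rfl, rfl⟩ := applyList_eq_app (by simp) he.symm
    have hlen : ts'.length + 1 ≤ ex4Sig.arityC c := by simpa using har
    cases c
    · simp [ex4Sig] at hlen
    · simp [ex4Sig] at hlen
    · obtain rfl : ts' = [] := List.eq_nil_of_length_eq_zero (by simpa [ex4Sig] using hlen)
      exact ⟨rfl, hts b (by simp)⟩
  | fapp φ ts har =>
    obtain ⟨ts', rfl, -⟩ := applyList_eq_app (by simp) he.symm
    rw [List.length_append] at har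
    cases φ <;> simp [ex4Sig] at har

theorem not_isPPat_ex4_applyList_fn_cons (φ : ex4Sig.FS) (x : Exp ex4Sig)
    (l : List (Exp ex4Sig)) : ¬ IsPPat (applyList (.fn φ) (x :: l)) := by
  intro h
  obtain ⟨a, b, hab⟩ := exists_applyList_eq_app (List.cons_ne_nil x l) (.fn φ)
  have hpat : IsPPat (.app a b) := hab ▸ h
  have hhead := congrArg Exp.head hab
  rw [head_applyList, Exp.head_app, hpat.ex4_app_inv.1] at hhead
  cases hhead

theorem DTree.ex4_eq_bot_or_cu_of_app {k : Ex4C} {p q t : Exp ex4Sig}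
    (d : DTree ex4Prog (.app p q) t) (hp : IsPPat p)
    (hq : q ∈ ({.bot, .cn k} : Set (Exp ex4Sig))) :
    t = .bot ∨ ∃ s ∈ ({.bot, .cn k} : Set (Exp ex4Sig)), t = .app (.cn .cu) s := by
  generalize he : Exp.app p q = e at d
  induction d generalizing p q with
  | bot => exact .inl rfl
  | rr => cases he
  | dc h es ts hsym hlen hpat ds =>
    obtain ⟨es', rfl, rfl⟩ := applyList_eq_app hsym.ne_app he.symm
    obtain ⟨ts', b, rfl⟩ := (List.eq_nil_or_concat' ts).resolve_left (by rintro rfl; simp at hlen)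
    have hlen' : es'.length = ts'.length := by simpa using hlen
    rw [applyList_append_singleton] at hpat ⊢
    have hb := (ds (q, b) (by rw [List.zip_append hlen']; simp)).mem_bot_cn hq
    exact .inr ⟨b, hb, by rw [(IsPPat.ex4_app_inv hpat).1]⟩
  | opr r hr θ hθ es as t hlen ds d _ ih =>
    obtain rfl : r = ⟨.f, [.var 0], .app (.var 1) (.var 0)⟩ := hr
    obtain ⟨e0, rfl⟩ := List.length_eq_one_iff.mp hlen
    rcases List.eq_nil_or_concat' as with rfl | ⟨as', y, rfl⟩
    · obtain ⟨rfl, rfl⟩ := Exp.app.inj he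
      have hθ0 := (ds (q, θ 0) (by simp [subst])).mem_bot_cn hq
      exact ih (hθ 1) hθ0 rfl
    · rw [← List.append_assoc, applyList_append_singleton] at he
      obtain ⟨rfl, -⟩ := Exp.app.inj he.symm
      exact absurd hp (not_isPPat_ex4_applyList_fn_cons Ex4F.f e0 as')

theorem deriv_ex4_f_cn (c : ex4Sig.CS) :
    Deriv ex4Prog (.app (.fn .f) (.cn c)) (.app (.cn .cu) (.cn c)) := by
  let θ : ℕ → Exp ex4Sig := fun n => if n = 0 then .cn c else .cn .cu
  have hθ : PSub θ := fun n => by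
    by_cases hn : n = 0 <;> simp only [θ, hn, if_true, if_false] <;> exact isPPat_cn _
  obtain ⟨dX⟩ := Deriv.cn (P := ex4Prog) c
  obtain ⟨dY⟩ := Deriv.cn_app (P := ex4Prog) (c := .cu) le_rfl (isPPat_cn c) (Deriv.cn c)
  refine ⟨.opr (P := ex4Prog) ⟨.f, [.var 0], .app (.var 1) (.var 0)⟩ rfl θ hθ [.cn c] [] _ rfl
    (fun p hp => ?_) dY⟩
  obtain rfl : p = (.cn c, .cn c) := by simpa [subst, θ] using hp
  exact dX

/-- With a unary constructor `c` in the signature, the denotations `⟦f 0⟧^P`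
and `⟦f 1⟧^P` differ: `c 0 ∈ ⟦f 0⟧^P` and `c 1 ∈ ⟦f 1⟧^P`, but
`c 0 ∉ ⟦f 1⟧^P` (the Example 2 counterexample to the hypothesis of full
abstraction disappears). -/
theorem ex4_den_differ :
    ((Exp.app (.cn .cu) (.cn .c0) : Exp ex4Sig) ∈ den ex4Prog (.app (.fn .f) (.cn .c0))) ∧
    ((Exp.app (.cn .cu) (.cn .c1) : Exp ex4Sig) ∈ den ex4Prog (.app (.fn .f) (.cn .c1))) ∧
    ((Exp.app (.cn .cu) (.cn .c0) : Exp ex4Sig) ∉ den ex4Prog (.app (.fn .f) (.cn .c1))) ∧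
    den ex4Prog (.app (.fn .f) (.cn .c0)) ≠
      den ex4Prog (.app (.fn .f) (.cn .c1)) := by
  have mem (c : ex4Sig.CS) :
      (Exp.app (.cn .cu) (.cn c) : Exp ex4Sig) ∈ den ex4Prog (.app (.fn .f) (.cn c)) :=
    ⟨isPPat_cn_app le_rfl (isPPat_cn c), deriv_ex4_f_cn c⟩
  have not_mem : (Exp.app (.cn .cu) (.cn .c0) : Exp ex4Sig) ∉
      den ex4Prog (.app (.fn .f) (.cn .c1)) := by
    rintro ⟨-, ⟨d⟩⟩
    rcases d.ex4_eq_bot_or_cu_of_app (k := .c1) (isPPat_fn Nat.one_pos) (.inr rfl) with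
      h | ⟨s, hs, h⟩
    · cases h
    · obtain rfl := (Exp.app.inj h).2
      rcases hs with hs | hs <;> cases hs
  exact ⟨mem .c0, mem .c1, not_mem, fun h => not_mem (h ▸ mem .c0)⟩
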